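/- With the setup of a quadratic Lie 2-algebroid in split form, for any other choice of bundle map γ': ∧²TM → 𝒢* (keeping σ fixed), writing γ' = γ + δ for some δ ∈ Γ(Hom(∧²TM, 𝒢*)), one has R_{γ'} = R_γ + 𝔩_1∘δ and I_{γ'} = I_γ + d_{∇¹}δ, and 𝒮(R_{γ'}, I_{γ'}) = 𝒮(R_γ, I_γ) + d( 𝒮(R_γ, δ) + (1/2)𝒮(𝔩_1∘δ, δ) ). Hence the cohomology class [𝒮(R_γ, I_γ)] ∈ H^5(M) does not depend on the choice of γ. -/

import Mathlib

/-- Exterior differential of a scalar `k`-form with respect to the action `nab` of vector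
fields on functions. -/
def dNab {V E : Type*} [LieRing V] [AddCommGroup E]
    (nab : V → E → E) {k : ℕ} (θ : (Fin k → V) → E) :
    (Fin (k + 1) → V) → E :=
  fun Xs =>
    (∑ i : Fin (k + 1), ((-1 : ℤ) ^ (i : ℕ)) • nab (Xs i) (θ (Xs ∘ i.succAbove)))
      + ∑ i : Fin (k + 1), ∑ j : Fin (k + 1),
          if h : (i : ℕ) < (j : ℕ) then
            ((-1 : ℤ) ^ (j : ℕ)) • θ (Function.update (Xs ∘ j.succAbove)
              ⟨(i : ℕ), by have hj := j.isLt; omega⟩ ⁅Xs i, Xs j⁆)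
          else 0

/-! `R_{γ'} = R_γ + 𝔩₁δ` and `I_{γ'} = I_γ + d_{∇¹}δ`, so by biadditivity of `𝒮` the difference
`𝒮(R_{γ'}, I_{γ'}) - 𝒮(R_γ, I_γ)` is `𝒮(R_γ, d_{∇¹}δ) + 𝒮(𝔩₁δ, I_γ) + 𝒮(𝔩₁δ, d_{∇¹}δ)`.
The Leibniz rule for `𝒮` of two 2-forms, the Bianchi identity `d_{∇⁰}R_γ = 𝔩₁I_γ`, the
compatibility `d_{∇⁰}(𝔩₁δ) = 𝔩₁(d_{∇¹}δ)` and the symmetry of `⟨𝔩₁ ·, ·⟩` give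
`d𝒮(R_γ, δ) = 𝒮(𝔩₁δ, I_γ) + 𝒮(R_γ, d_{∇¹}δ)` and `d𝒮(𝔩₁δ, δ) = 2 𝒮(𝔩₁δ, d_{∇¹}δ)`. -/

section Forms

variable {V A B C E : Type*} [AddCommGroup A] [AddCommGroup B] [AddCommGroup C] [AddCommGroup E]

theorem dNab_apply_four [LieRing V] (nab : V → E → E) (θ : (Fin 4 → V) → E) (Xs : Fin 5 → V) :
    dNab nab θ Xs =
      nab (Xs 0) (θ ![Xs 1, Xs 2, Xs 3, Xs 4]) - nab (Xs 1) (θ ![Xs 0, Xs 2, Xs 3, Xs 4])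
        + nab (Xs 2) (θ ![Xs 0, Xs 1, Xs 3, Xs 4]) - nab (Xs 3) (θ ![Xs 0, Xs 1, Xs 2, Xs 4])
        + nab (Xs 4) (θ ![Xs 0, Xs 1, Xs 2, Xs 3])
        - θ ![⁅Xs 0, Xs 1⁆, Xs 2, Xs 3, Xs 4] + θ ![⁅Xs 0, Xs 2⁆, Xs 1, Xs 3, Xs 4]
        - θ ![⁅Xs 0, Xs 3⁆, Xs 1, Xs 2, Xs 4] + θ ![⁅Xs 0, Xs 4⁆, Xs 1, Xs 2, Xs 3]
        + θ ![Xs 0, ⁅Xs 1, Xs 2⁆, Xs 3, Xs 4] - θ ![Xs 0, ⁅Xs 1, Xs 3⁆, Xs 2, Xs 4]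
        + θ ![Xs 0, ⁅Xs 1, Xs 4⁆, Xs 2, Xs 3] - θ ![Xs 0, Xs 1, ⁅Xs 2, Xs 3⁆, Xs 4]
        + θ ![Xs 0, Xs 1, ⁅Xs 2, Xs 4⁆, Xs 3] + θ ![Xs 0, Xs 1, Xs 2, ⁅Xs 3, Xs 4⁆] := by
  have eta : ∀ g : Fin 4 → V, θ g = θ ![g 0, g 1, g 2, g 3] := fun g =>
    congrArg θ (by funext k; fin_cases k <;> rfl)
  simp only [dNab, Fin.sum_univ_succ, Fin.sum_univ_zero]
  simp [eta (Xs ∘ _), eta (Function.update _ _ _), Fin.succAbove, sub_eq_add_neg, add_assoc]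

def dNabHom [LieRing V] (act : V → E →+ E) (k : ℕ) :
    ((Fin k → V) → E) →+ ((Fin (k + 1) → V) → E) :=
  AddMonoidHom.mk' (dNab fun X => act X) fun θ θ' => by
    have dite_add : ∀ (p : Prop) [Decidable p] (a b : p → E),
        (if h : p then a h + b h else 0) = (if h : p then a h else 0) + if h : p then b h else 0 := by
      intro p _ a b
      split_ifs <;> simp
    funext Xs
    simp only [dNab, Pi.add_apply, map_add, smul_add, dite_add, Finset.sum_add_distrib]
    abel

theorem dNabHom_apply [LieRing V] (act : V → E →+ E) (k : ℕ) (θ : (Fin k → V) → E) :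
    dNabHom act k θ = dNab (fun X => act X) θ :=
  rfl

def dNab₂ [LieRing V] (nab : V → E → E) (α : V → V → E) : V → V → V → E :=
  fun X Y Z => nab X (α Y Z) - nab Y (α X Z) + nab Z (α X Y)
    - α ⁅X, Y⁆ Z + α ⁅X, Z⁆ Y - α ⁅Y, Z⁆ X

theorem dNab₂_comp [LieRing V] (nab : V → A → A) (nab' : V → B → B) (l : B →+ A)
    (hl : ∀ (X : V) (m : B), l (nab' X m) = nab X (l m)) (β : V → V → B) :
    dNab₂ nab (fun X Y => l (β X Y)) = fun X Y Z => l (dNab₂ nab' β X Y Z) := by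
  funext X Y Z
  simp only [dNab₂, map_add, map_sub, hl]

/-- The paper's `𝒮(α, β)` for 2-forms, a sum over (2,2)-shuffles with no normalising factor;
`pairWedge₂₃` is the (2,3) version. -/
def pairWedge₂₂ (pair : A →+ B →+ C) (α : V → V → A) (β : V → V → B) : (Fin 4 → V) → C :=
  fun Xs =>
    pair (α (Xs 0) (Xs 1)) (β (Xs 2) (Xs 3))
      - pair (α (Xs 0) (Xs 2)) (β (Xs 1) (Xs 3))
      + pair (α (Xs 0) (Xs 3)) (β (Xs 1) (Xs 2))
      + pair (α (Xs 1) (Xs 2)) (β (Xs 0) (Xs 3))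
      - pair (α (Xs 1) (Xs 3)) (β (Xs 0) (Xs 2))
      + pair (α (Xs 2) (Xs 3)) (β (Xs 0) (Xs 1))

def pairWedge₂₃ (pair : A →+ B →+ C) (α : V → V → A) (β : V → V → V → B) : (Fin 5 → V) → C :=
  fun Xs =>
    pair (α (Xs 0) (Xs 1)) (β (Xs 2) (Xs 3) (Xs 4))
      - pair (α (Xs 0) (Xs 2)) (β (Xs 1) (Xs 3) (Xs 4))
      + pair (α (Xs 0) (Xs 3)) (β (Xs 1) (Xs 2) (Xs 4))
      - pair (α (Xs 0) (Xs 4)) (β (Xs 1) (Xs 2) (Xs 3))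
      + pair (α (Xs 1) (Xs 2)) (β (Xs 0) (Xs 3) (Xs 4))
      - pair (α (Xs 1) (Xs 3)) (β (Xs 0) (Xs 2) (Xs 4))
      + pair (α (Xs 1) (Xs 4)) (β (Xs 0) (Xs 2) (Xs 3))
      + pair (α (Xs 2) (Xs 3)) (β (Xs 0) (Xs 1) (Xs 4))
      - pair (α (Xs 2) (Xs 4)) (β (Xs 0) (Xs 1) (Xs 3))
      + pair (α (Xs 3) (Xs 4)) (β (Xs 0) (Xs 1) (Xs 2))

theorem pairWedge₂₃_add_left (pair : A →+ B →+ C) (α α' : V → V → A) (β : V → V → V → B) :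
    pairWedge₂₃ pair (α + α') β = pairWedge₂₃ pair α β + pairWedge₂₃ pair α' β := by
  funext Xs
  simp only [pairWedge₂₃, Pi.add_apply, map_add, AddMonoidHom.add_apply]
  abel

theorem pairWedge₂₃_add_right (pair : A →+ B →+ C) (α : V → V → A) (β β' : V → V → V → B) :
    pairWedge₂₃ pair α (β + β') = pairWedge₂₃ pair α β + pairWedge₂₃ pair α β' := by
  funext Xs
  simp only [pairWedge₂₃, Pi.add_apply, map_add]
  abel

theorem pairWedge₂₃_flip_comp (pair : A →+ B →+ C) (l : B →+ A)
    (hl : ∀ m p : B, pair (l m) p = pair (l p) m) (β : V → V → B) (γ : V → V → V → B) :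
    pairWedge₂₃ pair.flip β (fun X Y Z => l (γ X Y Z))
      = pairWedge₂₃ pair (fun X Y => l (β X Y)) γ := by
  funext Xs
  simp only [pairWedge₂₃, AddMonoidHom.flip_apply, hl (γ _ _ _)]

/-- Leibniz rule: `𝒮(d_∇ α, β)` enters as `𝒮(β, d_∇ α)` for the flipped pairing, with no sign
since `3 · 2` is even. -/
theorem dNab_pairWedge₂₂ [LieRing V] (act : V → C →+ C) (pair : A →+ B →+ C)
    (nab : V → A → A) (nab' : V → B → B)
    (hdual : ∀ (X : V) (u : A) (m : B), act X (pair u m) = pair (nab X u) m + pair u (nab' X m))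
    {α : V → V → A} {β : V → V → B} (hα : ∀ X Y, α X Y = -α Y X) (hβ : ∀ X Y, β X Y = -β Y X) :
    dNab (fun X => act X) (pairWedge₂₂ pair α β)
      = pairWedge₂₃ pair.flip β (dNab₂ nab α) + pairWedge₂₃ pair α (dNab₂ nab' β) := by
  funext Xs
  have hα' : ∀ X Y Z : V, α X ⁅Y, Z⁆ = -α ⁅Y, Z⁆ X := fun X Y Z => hα X _
  have hβ' : ∀ X Y Z : V, β X ⁅Y, Z⁆ = -β ⁅Y, Z⁆ X := fun X Y Z => hβ X _
  rw [dNab_apply_four]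
  simp only [pairWedge₂₂, pairWedge₂₃, dNab₂, Matrix.cons_val, Pi.add_apply, AddMonoidHom.flip_apply,
    map_add, map_sub, map_neg, hdual, hα', hβ', AddMonoidHom.neg_apply]
  abel

end Forms

theorem first_pontryagin_form_independent_of_gamma_general
    (V R G Gs : Type) [LieRing V]
    [AddCommGroup R] [Module ℝ R] [AddCommGroup G] [AddCommGroup Gs]
    (act : V → R → R)
    (hact_add : ∀ (X : V) (f g : R), act X (f + g) = act X f + act X g)
    (pair : G → Gs → R)
    (hpair_addl : ∀ (u v : G) (m : Gs), pair (u + v) m = pair u m + pair v m)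
    (hpair_addr : ∀ (u : G) (m p : Gs), pair u (m + p) = pair u m + pair u p)
    (nab0 : V → G → G) (nab1 : V → Gs → Gs)
    (hdual : ∀ (X : V) (u : G) (m : Gs),
      act X (pair u m) = pair (nab0 X u) m + pair u (nab1 X m))
    (l1 : Gs → G)
    (hl1_add : ∀ m p : Gs, l1 (m + p) = l1 m + l1 p)
    (hpair_l1 : ∀ m p : Gs, pair (l1 m) p = pair (l1 p) m)
    -- compatibility 𝔩₁ ∘ ∇¹ = ∇⁰ ∘ 𝔩₁
    (hcompat : ∀ (X : V) (m : Gs), l1 (nab1 X m) = nab0 X (l1 m))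
    -- curvatures for the splitting (σ, γ)
    (Rg : V → V → G)
    (hRg_skew : ∀ X Y : V, Rg X Y = - Rg Y X)
    (Ig : V → V → V → Gs)
    -- Bianchi identity d_{∇⁰}R_γ = 𝔩₁ I_γ
    (hBianchi : ∀ X Y Z : V,
      nab0 X (Rg Y Z) - nab0 Y (Rg X Z) + nab0 Z (Rg X Y)
        - Rg ⁅X, Y⁆ Z + Rg ⁅X, Z⁆ Y - Rg ⁅Y, Z⁆ X = l1 (Ig X Y Z))
    -- the change δ = γ' − γ of the bundle map γ
    (δ : V → V → Gs)
    (hδ_skew : ∀ X Y : V, δ X Y = - δ Y X)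
    -- curvatures for the splitting (σ, γ') :  R_{γ'} = R_γ + 𝔩₁∘δ,  I_{γ'} = I_γ + d_{∇¹}δ
    (Rg' : V → V → G)
    (hRg' : ∀ X Y : V, Rg' X Y = Rg X Y + l1 (δ X Y))
    (Ig' : V → V → V → Gs)
    (hIg' : ∀ X Y Z : V, Ig' X Y Z = Ig X Y Z
      + (nab1 X (δ Y Z) - nab1 Y (δ X Z) + nab1 Z (δ X Y)
          - δ ⁅X, Y⁆ Z + δ ⁅X, Z⁆ Y - δ ⁅Y, Z⁆ X))
    -- the 5-forms 𝒮(R_γ, I_γ) and 𝒮(R_{γ'}, I_{γ'})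
    (P5 P5' : (Fin 5 → V) → R)
    (hP5 : ∀ Xs : Fin 5 → V, P5 Xs =
      pair (Rg (Xs 0) (Xs 1)) (Ig (Xs 2) (Xs 3) (Xs 4))
        - pair (Rg (Xs 0) (Xs 2)) (Ig (Xs 1) (Xs 3) (Xs 4))
        + pair (Rg (Xs 0) (Xs 3)) (Ig (Xs 1) (Xs 2) (Xs 4))
        - pair (Rg (Xs 0) (Xs 4)) (Ig (Xs 1) (Xs 2) (Xs 3))
        + pair (Rg (Xs 1) (Xs 2)) (Ig (Xs 0) (Xs 3) (Xs 4))
        - pair (Rg (Xs 1) (Xs 3)) (Ig (Xs 0) (Xs 2) (Xs 4))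
        + pair (Rg (Xs 1) (Xs 4)) (Ig (Xs 0) (Xs 2) (Xs 3))
        + pair (Rg (Xs 2) (Xs 3)) (Ig (Xs 0) (Xs 1) (Xs 4))
        - pair (Rg (Xs 2) (Xs 4)) (Ig (Xs 0) (Xs 1) (Xs 3))
        + pair (Rg (Xs 3) (Xs 4)) (Ig (Xs 0) (Xs 1) (Xs 2)))
    (hP5' : ∀ Xs : Fin 5 → V, P5' Xs =
      pair (Rg' (Xs 0) (Xs 1)) (Ig' (Xs 2) (Xs 3) (Xs 4))
        - pair (Rg' (Xs 0) (Xs 2)) (Ig' (Xs 1) (Xs 3) (Xs 4))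
        + pair (Rg' (Xs 0) (Xs 3)) (Ig' (Xs 1) (Xs 2) (Xs 4))
        - pair (Rg' (Xs 0) (Xs 4)) (Ig' (Xs 1) (Xs 2) (Xs 3))
        + pair (Rg' (Xs 1) (Xs 2)) (Ig' (Xs 0) (Xs 3) (Xs 4))
        - pair (Rg' (Xs 1) (Xs 3)) (Ig' (Xs 0) (Xs 2) (Xs 4))
        + pair (Rg' (Xs 1) (Xs 4)) (Ig' (Xs 0) (Xs 2) (Xs 3))
        + pair (Rg' (Xs 2) (Xs 3)) (Ig' (Xs 0) (Xs 1) (Xs 4))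
        - pair (Rg' (Xs 2) (Xs 4)) (Ig' (Xs 0) (Xs 1) (Xs 3))
        + pair (Rg' (Xs 3) (Xs 4)) (Ig' (Xs 0) (Xs 1) (Xs 2)))
    -- the primitive 4-form 𝒮(R_γ, δ) + (1/2)𝒮(𝔩₁∘δ, δ)
    (C4 : (Fin 4 → V) → R)
    (hC4 : ∀ Xs : Fin 4 → V, C4 Xs =
      (pair (Rg (Xs 0) (Xs 1)) (δ (Xs 2) (Xs 3))
        - pair (Rg (Xs 0) (Xs 2)) (δ (Xs 1) (Xs 3))
        + pair (Rg (Xs 0) (Xs 3)) (δ (Xs 1) (Xs 2))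
        + pair (Rg (Xs 1) (Xs 2)) (δ (Xs 0) (Xs 3))
        - pair (Rg (Xs 1) (Xs 3)) (δ (Xs 0) (Xs 2))
        + pair (Rg (Xs 2) (Xs 3)) (δ (Xs 0) (Xs 1)))
      + ((1 : ℝ) / 2) •
        (pair (l1 (δ (Xs 0) (Xs 1))) (δ (Xs 2) (Xs 3))
          - pair (l1 (δ (Xs 0) (Xs 2))) (δ (Xs 1) (Xs 3))
          + pair (l1 (δ (Xs 0) (Xs 3))) (δ (Xs 1) (Xs 2))
          + pair (l1 (δ (Xs 1) (Xs 2))) (δ (Xs 0) (Xs 3))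
          - pair (l1 (δ (Xs 1) (Xs 3))) (δ (Xs 0) (Xs 2))
          + pair (l1 (δ (Xs 2) (Xs 3))) (δ (Xs 0) (Xs 1)))) :
    -- 𝒮(R_{γ'}, I_{γ'}) = 𝒮(R_γ, I_γ) + d(𝒮(R_γ, δ) + (1/2)𝒮(𝔩₁∘δ, δ))
    ∀ Xs : Fin 5 → V, P5' Xs = P5 Xs + dNab act C4 Xs := by
  let actH : V → R →+ R := fun X => AddMonoidHom.mk' (act X) (hact_add X)
  let pairH : G →+ Gs →+ R := AddMonoidHom.mk' (fun u => AddMonoidHom.mk' (pair u) (hpair_addr u))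
    fun u v => AddMonoidHom.ext (hpair_addl u v)
  let l1H : Gs →+ G := AddMonoidHom.mk' l1 hl1_add
  let Lδ : V → V → G := fun X Y => l1H (δ X Y)
  have hLδ : ∀ X Y, Lδ X Y = -Lδ Y X := fun X Y => by
    change l1H (δ X Y) = -l1H (δ Y X)
    rw [hδ_skew, map_neg]
  have hP5eq : P5 = pairWedge₂₃ pairH Rg Ig := funext hP5
  have hP5'eq : P5' = pairWedge₂₃ pairH (Rg + Lδ) (Ig + dNab₂ nab1 δ) :=
    funext fun Xs => by rw [hP5']; simp only [hRg', hIg']; rfl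
  have hC4eq : C4 = pairWedge₂₂ pairH Rg δ + (1 / 2 : ℝ) • pairWedge₂₂ pairH Lδ δ := funext hC4
  have hdRg : dNab₂ nab0 Rg = fun X Y Z => l1H (Ig X Y Z) := funext₃ hBianchi
  have hdLδ : dNab₂ nab0 Lδ = fun X Y Z => l1H (dNab₂ nab1 δ X Y Z) :=
    dNab₂_comp nab0 nab1 l1H hcompat δ
  have hdC4 : dNab act C4 = pairWedge₂₃ pairH Lδ Ig + pairWedge₂₃ pairH Rg (dNab₂ nab1 δ)
      + ((2 : ℕ)⁻¹ : ℝ) • (pairWedge₂₃ pairH Lδ (dNab₂ nab1 δ) + pairWedge₂₃ pairH Lδ (dNab₂ nab1 δ)) := by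
    change dNabHom actH 4 C4 = _
    rw [hC4eq, map_add, one_div, ← Nat.cast_ofNat (R := ℝ) (n := 2),
      map_inv_natCast_smul (dNabHom actH 4) ℝ ℝ, dNabHom_apply, dNabHom_apply,
      dNab_pairWedge₂₂ actH pairH nab0 nab1 hdual hRg_skew hδ_skew,
      dNab_pairWedge₂₂ actH pairH nab0 nab1 hdual hLδ hδ_skew, hdRg, hdLδ,
      pairWedge₂₃_flip_comp pairH l1H hpair_l1, pairWedge₂₃_flip_comp pairH l1H hpair_l1]
  intro Xs
  rw [hP5'eq, hP5eq, hdC4, pairWedge₂₃_add_left, pairWedge₂₃_add_right, pairWedge₂₃_add_right]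
  simp only [Pi.add_apply, Pi.smul_apply]
  module

/-- changing `γ` to `γ' = γ + δ` changes the curvatures by
`R_{γ'} = R_γ + 𝔩₁∘δ`, `I_{γ'} = I_γ + d_{∇¹}δ`, and
`𝒮(R_{γ'}, I_{γ'}) = 𝒮(R_γ, I_γ) + d(𝒮(R_γ, δ) + (1/2)𝒮(𝔩₁∘δ, δ))`; hence the class
`[𝒮(R_γ, I_γ)] ∈ H⁵(M)` does not depend on the choice of `γ`. -/
theorem first_pontryagin_form_independent_of_gamma
    (V R G Gs : Type) [LieRing V]
    [AddCommGroup R] [Module ℝ R] [AddCommGroup G] [AddCommGroup Gs]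
    (act : V → R → R)
    (hact_add : ∀ (X : V) (f g : R), act X (f + g) = act X f + act X g)
    (hact_bracket : ∀ (X Y : V) (f : R), act ⁅X, Y⁆ f = act X (act Y f) - act Y (act X f))
    (pair : G → Gs → R)
    (hpair_addl : ∀ (u v : G) (m : Gs), pair (u + v) m = pair u m + pair v m)
    (hpair_addr : ∀ (u : G) (m p : Gs), pair u (m + p) = pair u m + pair u p)
    (nab0 : V → G → G) (nab1 : V → Gs → Gs)
    (hnab0_add : ∀ (X : V) (u v : G), nab0 X (u + v) = nab0 X u + nab0 X v)
    (hnab1_add : ∀ (X : V) (m p : Gs), nab1 X (m + p) = nab1 X m + nab1 X p)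
    (hdual : ∀ (X : V) (u : G) (m : Gs),
      act X (pair u m) = pair (nab0 X u) m + pair u (nab1 X m))
    (l1 : Gs → G)
    (hl1_add : ∀ m p : Gs, l1 (m + p) = l1 m + l1 p)
    (hpair_l1 : ∀ m p : Gs, pair (l1 m) p = pair (l1 p) m)
    -- compatibility 𝔩₁ ∘ ∇¹ = ∇⁰ ∘ 𝔩₁
    (hcompat : ∀ (X : V) (m : Gs), l1 (nab1 X m) = nab0 X (l1 m))
    -- curvatures for the splitting (σ, γ)
    (Rg : V → V → G)
    (hRg_skew : ∀ X Y : V, Rg X Y = - Rg Y X)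
    (Ig : V → V → V → Gs)
    (hIg_skew1 : ∀ X Y Z : V, Ig X Y Z = - Ig Y X Z)
    (hIg_skew2 : ∀ X Y Z : V, Ig X Y Z = - Ig X Z Y)
    -- Bianchi identity d_{∇⁰}R_γ = 𝔩₁ I_γ
    (hBianchi : ∀ X Y Z : V,
      nab0 X (Rg Y Z) - nab0 Y (Rg X Z) + nab0 Z (Rg X Y)
        - Rg ⁅X, Y⁆ Z + Rg ⁅X, Z⁆ Y - Rg ⁅Y, Z⁆ X = l1 (Ig X Y Z))
    -- the change δ = γ' − γ of the bundle map γ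
    (δ : V → V → Gs)
    (hδ_skew : ∀ X Y : V, δ X Y = - δ Y X)
    -- curvatures for the splitting (σ, γ') :  R_{γ'} = R_γ + 𝔩₁∘δ,  I_{γ'} = I_γ + d_{∇¹}δ
    (Rg' : V → V → G)
    (hRg' : ∀ X Y : V, Rg' X Y = Rg X Y + l1 (δ X Y))
    (Ig' : V → V → V → Gs)
    (hIg' : ∀ X Y Z : V, Ig' X Y Z = Ig X Y Z
      + (nab1 X (δ Y Z) - nab1 Y (δ X Z) + nab1 Z (δ X Y)
          - δ ⁅X, Y⁆ Z + δ ⁅X, Z⁆ Y - δ ⁅Y, Z⁆ X))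
    -- the 5-forms 𝒮(R_γ, I_γ) and 𝒮(R_{γ'}, I_{γ'})
    (P5 P5' : (Fin 5 → V) → R)
    (hP5 : ∀ Xs : Fin 5 → V, P5 Xs =
      pair (Rg (Xs 0) (Xs 1)) (Ig (Xs 2) (Xs 3) (Xs 4))
        - pair (Rg (Xs 0) (Xs 2)) (Ig (Xs 1) (Xs 3) (Xs 4))
        + pair (Rg (Xs 0) (Xs 3)) (Ig (Xs 1) (Xs 2) (Xs 4))
        - pair (Rg (Xs 0) (Xs 4)) (Ig (Xs 1) (Xs 2) (Xs 3))
        + pair (Rg (Xs 1) (Xs 2)) (Ig (Xs 0) (Xs 3) (Xs 4))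
        - pair (Rg (Xs 1) (Xs 3)) (Ig (Xs 0) (Xs 2) (Xs 4))
        + pair (Rg (Xs 1) (Xs 4)) (Ig (Xs 0) (Xs 2) (Xs 3))
        + pair (Rg (Xs 2) (Xs 3)) (Ig (Xs 0) (Xs 1) (Xs 4))
        - pair (Rg (Xs 2) (Xs 4)) (Ig (Xs 0) (Xs 1) (Xs 3))
        + pair (Rg (Xs 3) (Xs 4)) (Ig (Xs 0) (Xs 1) (Xs 2)))
    (hP5' : ∀ Xs : Fin 5 → V, P5' Xs =
      pair (Rg' (Xs 0) (Xs 1)) (Ig' (Xs 2) (Xs 3) (Xs 4))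
        - pair (Rg' (Xs 0) (Xs 2)) (Ig' (Xs 1) (Xs 3) (Xs 4))
        + pair (Rg' (Xs 0) (Xs 3)) (Ig' (Xs 1) (Xs 2) (Xs 4))
        - pair (Rg' (Xs 0) (Xs 4)) (Ig' (Xs 1) (Xs 2) (Xs 3))
        + pair (Rg' (Xs 1) (Xs 2)) (Ig' (Xs 0) (Xs 3) (Xs 4))
        - pair (Rg' (Xs 1) (Xs 3)) (Ig' (Xs 0) (Xs 2) (Xs 4))
        + pair (Rg' (Xs 1) (Xs 4)) (Ig' (Xs 0) (Xs 2) (Xs 3))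
        + pair (Rg' (Xs 2) (Xs 3)) (Ig' (Xs 0) (Xs 1) (Xs 4))
        - pair (Rg' (Xs 2) (Xs 4)) (Ig' (Xs 0) (Xs 1) (Xs 3))
        + pair (Rg' (Xs 3) (Xs 4)) (Ig' (Xs 0) (Xs 1) (Xs 2)))
    -- the primitive 4-form 𝒮(R_γ, δ) + (1/2)𝒮(𝔩₁∘δ, δ)
    (C4 : (Fin 4 → V) → R)
    (hC4 : ∀ Xs : Fin 4 → V, C4 Xs =
      (pair (Rg (Xs 0) (Xs 1)) (δ (Xs 2) (Xs 3))
        - pair (Rg (Xs 0) (Xs 2)) (δ (Xs 1) (Xs 3))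
        + pair (Rg (Xs 0) (Xs 3)) (δ (Xs 1) (Xs 2))
        + pair (Rg (Xs 1) (Xs 2)) (δ (Xs 0) (Xs 3))
        - pair (Rg (Xs 1) (Xs 3)) (δ (Xs 0) (Xs 2))
        + pair (Rg (Xs 2) (Xs 3)) (δ (Xs 0) (Xs 1)))
      + ((1 : ℝ) / 2) •
        (pair (l1 (δ (Xs 0) (Xs 1))) (δ (Xs 2) (Xs 3))
          - pair (l1 (δ (Xs 0) (Xs 2))) (δ (Xs 1) (Xs 3))
          + pair (l1 (δ (Xs 0) (Xs 3))) (δ (Xs 1) (Xs 2))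
          + pair (l1 (δ (Xs 1) (Xs 2))) (δ (Xs 0) (Xs 3))
          - pair (l1 (δ (Xs 1) (Xs 3))) (δ (Xs 0) (Xs 2))
          + pair (l1 (δ (Xs 2) (Xs 3))) (δ (Xs 0) (Xs 1)))) :
    -- 𝒮(R_{γ'}, I_{γ'}) = 𝒮(R_γ, I_γ) + d(𝒮(R_γ, δ) + (1/2)𝒮(𝔩₁∘δ, δ))
    ∀ Xs : Fin 5 → V, P5' Xs = P5 Xs + dNab act C4 Xs :=
  first_pontryagin_form_independent_of_gamma_general V R G Gs act hact_add pair hpair_addl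
    hpair_addr nab0 nab1 hdual l1 hl1_add hpair_l1 hcompat Rg hRg_skew Ig hBianchi δ hδ_skew Rg'
    hRg' Ig' hIg' P5 P5' hP5 hP5' C4 hC4
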